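/- Let M be a proper geodesic metric space satisfying the CN inequality (i.e., a proper CAT(0) space) and let γ be a geodesic ray in M. For a surjective isometry g of M and a point a ∈ M set ψ_γ(g, a) := β_γ(g(a)) − β_γ(a). Then: (1) ψ_γ(g, a) depends only on the asymptoty class of γ: if γ' is a geodesic ray asymptotic to γ, then β_{γ'}(g(a)) − β_{γ'}(a) = β_γ(g(a)) − β_γ(a) for all a; and (2) ψ_γ satisfies the cocycle identity ψ_γ(g ∘ h, a) = ψ_γ(g, h(a)) + ψ_γ(h, a) for all surjective isometries g, h of M and all a ∈ M. -/
import Mathlib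


open Metric Filter Set

/-- A geodesic ray in a metric space: an isometric embedding of `[0,∞)`,
modelled as a map `ℝ → M` that is isometric on nonnegative reals. -/
def IsGeodesicRay {M : Type*} [MetricSpace M] (γ : ℝ → M) : Prop :=
  ∀ s t : ℝ, 0 ≤ s → 0 ≤ t → dist (γ s) (γ t) = |s - t|

/-- The Busemann function of a geodesic ray:
`β_γ(b) = sup_{t ≥ 0} (t − d(b, γ(t)))`. -/
noncomputable def busemann {M : Type*} [MetricSpace M] (γ : ℝ → M) (b : M) : ℝ :=
  sSup {x : ℝ | ∃ t : ℝ, 0 ≤ t ∧ x = t - dist b (γ t)}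

/-- The (closed) horoball of `γ` at level `s`: `{p | β_γ(p) ≥ s}`. -/
def horoball {M : Type*} [MetricSpace M] (γ : ℝ → M) (s : ℝ) : Set M :=
  {p : M | s ≤ busemann γ p}

/-- `M` is a geodesic metric space: any two points are joined by a geodesic segment. -/
def IsGeodesicSpace (M : Type*) [MetricSpace M] : Prop :=
  ∀ a b : M, ∃ σ : ℝ → M, σ 0 = a ∧ σ (dist a b) = b ∧
    ∀ s t : ℝ, s ∈ Set.Icc 0 (dist a b) → t ∈ Set.Icc 0 (dist a b) →
      dist (σ s) (σ t) = |s - t|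

/-- The CN (Bruhat–Tits) inequality; a geodesic space satisfying it is CAT(0). -/
def CNInequality (M : Type*) [MetricSpace M] : Prop :=
  ∀ x y z m : M, dist y m = dist y z / 2 → dist m z = dist y z / 2 →
    dist x m ^ 2 ≤ dist x y ^ 2 / 2 + dist x z ^ 2 / 2 - dist y z ^ 2 / 4

/-- Two geodesic rays are asymptotic if they stay at bounded distance. -/
def AsymptoticRays {M : Type*} [MetricSpace M] (γ γ' : ℝ → M) : Prop :=
  ∃ r : ℝ, ∀ t : ℝ, 0 ≤ t → dist (γ t) (γ' t) ≤ r

open Topology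

section BusemannAux

variable {M : Type*} [MetricSpace M]

lemma busemann_set_nonempty (γ : ℝ → M) (b : M) :
    {x : ℝ | ∃ t : ℝ, 0 ≤ t ∧ x = t - dist b (γ t)}.Nonempty :=
  ⟨0 - dist b (γ 0), 0, le_refl 0, rfl⟩

lemma busemann_set_bdd {γ : ℝ → M} (hγ : IsGeodesicRay γ) (b : M) :
    BddAbove {x : ℝ | ∃ t : ℝ, 0 ≤ t ∧ x = t - dist b (γ t)} := by
  refine ⟨dist b (γ 0), ?_⟩
  rintro x ⟨t, ht, rfl⟩
  have h1 : dist (γ 0) (γ t) = |0 - t| := hγ 0 t le_rfl ht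
  rw [zero_sub, abs_neg, abs_of_nonneg ht] at h1
  have h2 : dist (γ 0) (γ t) ≤ dist (γ 0) b + dist b (γ t) := dist_triangle _ _ _
  have h3 := dist_comm (γ 0) b
  linarith

lemma le_busemann {γ : ℝ → M} (hγ : IsGeodesicRay γ) (b : M) {t : ℝ} (ht : 0 ≤ t) :
    t - dist b (γ t) ≤ busemann γ b :=
  le_csSup (busemann_set_bdd hγ b) ⟨t, ht, rfl⟩

lemma busemann_le {γ : ℝ → M} (b : M) {A : ℝ}
    (h : ∀ t : ℝ, 0 ≤ t → t - dist b (γ t) ≤ A) : busemann γ b ≤ A :=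
  csSup_le (busemann_set_nonempty γ b) (by rintro x ⟨t, ht, rfl⟩; exact h t ht)

lemma busemann_lipschitz {γ : ℝ → M} (hγ : IsGeodesicRay γ) (x y : M) :
    busemann γ x ≤ busemann γ y + dist x y := by
  apply busemann_le
  intro t ht
  have h1 := le_busemann hγ y ht
  have h2 : dist y (γ t) ≤ dist y x + dist x (γ t) := dist_triangle _ _ _
  have h3 := dist_comm x y
  linarith

lemma busemann_self {γ : ℝ → M} (hγ : IsGeodesicRay γ) {u : ℝ} (hu : 0 ≤ u) :
    busemann γ (γ u) = u := by
  apply le_antisymm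
  · apply busemann_le
    intro t ht
    have h1 : dist (γ u) (γ t) = |u - t| := hγ u t hu ht
    have h2 : t - u ≤ |u - t| := by
      rw [abs_sub_comm]; exact le_abs_self _
    linarith [h1 ▸ h2]
  · have h := le_busemann hγ (γ u) hu
    simpa using h

lemma busemann_term_mono {γ : ℝ → M} (hγ : IsGeodesicRay γ) (x : M) {s t : ℝ}
    (hs : 0 ≤ s) (hst : s ≤ t) :
    s - dist x (γ s) ≤ t - dist x (γ t) := by
  have ht : 0 ≤ t := hs.trans hst
  have h1 : dist (γ s) (γ t) = |s - t| := hγ s t hs ht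
  rw [abs_of_nonpos (by linarith)] at h1
  have h2 : dist x (γ t) ≤ dist x (γ s) + dist (γ s) (γ t) := dist_triangle _ _ _
  linarith

end BusemannAux

section StrongConvexity

variable {M : Type*} [MetricSpace M]

set_option maxHeartbeats 1000000 in
/-- Strong convexity of the squared distance along a geodesic (multiplied form),
derived from the CN inequality by dyadic induction and a limit argument. -/
lemma sc_aux (hCN : CNInequality M) {a b : M} {σ : ℝ → M}
    (h0 : σ 0 = a) (hL : σ (dist a b) = b)
    (hσ : ∀ s t : ℝ, s ∈ Set.Icc 0 (dist a b) → t ∈ Set.Icc 0 (dist a b) →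
      dist (σ s) (σ t) = |s - t|)
    (x : M) {u : ℝ} (hu : u ∈ Set.Icc 0 (dist a b)) :
    dist x (σ u) ^ 2 * dist a b ≤
      (dist a b - u) * dist x a ^ 2 + u * dist x b ^ 2 - u * (dist a b - u) * dist a b := by
  set L := dist a b with hLdef
  have hL0 : 0 ≤ L := dist_nonneg
  have hmem : ∀ (n : ℕ) (k : ℕ), n ≤ 2 ^ k → ((n : ℝ) * (L / 2 ^ k)) ∈ Set.Icc 0 L := by
    intro n k hn
    constructor
    · positivity
    · have h1 : (n : ℝ) * (L / 2 ^ k) ≤ (2 ^ k : ℝ) * (L / 2 ^ k) := by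
        apply mul_le_mul_of_nonneg_right _ (by positivity)
        exact_mod_cast hn
      have h2 : (2 ^ k : ℝ) * (L / 2 ^ k) = L := by field_simp
      linarith
  have key : ∀ k : ℕ, ∀ j : ℕ, j ≤ 2 ^ k →
      dist x (σ ((j : ℝ) * (L / 2 ^ k))) ^ 2 * L ≤
        (L - (j : ℝ) * (L / 2 ^ k)) * dist x a ^ 2 + ((j : ℝ) * (L / 2 ^ k)) * dist x b ^ 2
          - ((j : ℝ) * (L / 2 ^ k)) * (L - (j : ℝ) * (L / 2 ^ k)) * L := by
    intro k
    induction k with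
    | zero =>
      intro j hj
      interval_cases j
      · have e : ((0 : ℕ) : ℝ) * (L / 2 ^ 0) = 0 := by norm_num
        rw [e, h0]
        ring_nf
        nlinarith [sq_nonneg (dist x a)]
      · have e : ((1 : ℕ) : ℝ) * (L / 2 ^ 0) = L := by norm_num
        rw [e, hL]
        ring_nf
        nlinarith [sq_nonneg (dist x b)]
    | succ k ih =>
      intro j hj
      have h2p : 2 ^ (k + 1) = 2 * 2 ^ k := by ring
      rcases Nat.even_or_odd j with ⟨i, hi⟩ | ⟨i, hi⟩
      · subst hi
        have hi2 : i ≤ 2 ^ k := by omega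
        have harg : ((i + i : ℕ) : ℝ) * (L / 2 ^ (k + 1)) = (i : ℝ) * (L / 2 ^ k) := by
          push_cast
          rw [pow_succ]
          ring
        rw [harg]
        exact ih i hi2
      · subst hi
        have hik : i + 1 ≤ 2 ^ k := by omega
        have hik' : i ≤ 2 ^ k := by omega
        set v : ℝ := (i : ℝ) * (L / 2 ^ k) with hv
        set w : ℝ := ((i + 1 : ℕ) : ℝ) * (L / 2 ^ k) with hw
        have hvw : v ≤ w := by
          rw [hv, hw]
          apply mul_le_mul_of_nonneg_right _ (by positivity)
          push_cast; linarith
        have hmid : ((2 * i + 1 : ℕ) : ℝ) * (L / 2 ^ (k + 1)) = (v + w) / 2 := by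
          rw [hv, hw]
          push_cast
          rw [pow_succ]
          field_simp
          ring
        have hvmem : v ∈ Set.Icc 0 L := hmem i k hik'
        have hwmem : w ∈ Set.Icc 0 L := hmem (i + 1) k hik
        have hmmem : (v + w) / 2 ∈ Set.Icc 0 L :=
          ⟨by linarith [hvmem.1, hwmem.1], by linarith [hvmem.2, hwmem.2]⟩
        have hdvw : dist (σ v) (σ w) = w - v := by
          rw [hσ v w hvmem hwmem, abs_of_nonpos (by linarith)]
          ring
        have hdvm : dist (σ v) (σ ((v + w) / 2)) = dist (σ v) (σ w) / 2 := by
          rw [hσ v ((v + w) / 2) hvmem hmmem, hdvw, abs_of_nonpos (by linarith)]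
          ring
        have hdmw : dist (σ ((v + w) / 2)) (σ w) = dist (σ v) (σ w) / 2 := by
          rw [hσ ((v + w) / 2) w hmmem hwmem, hdvw, abs_of_nonpos (by linarith)]
          ring
        have hcn := hCN x (σ v) (σ w) (σ ((v + w) / 2)) hdvm hdmw
        rw [hdvw] at hcn
        have ihv := ih i hik'
        have ihw := ih (i + 1) hik
        rw [← hv] at ihv
        rw [← hw] at ihw
        rw [hmid]
        have hcnL := mul_le_mul_of_nonneg_right hcn hL0
        nlinarith [hcnL, ihv, ihw]
  -- now extend to arbitrary u by a limit argument
  rcases eq_or_lt_of_le hL0 with hz | hLpos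
  · obtain ⟨hu0, huL⟩ := hu
    have hu0' : u = 0 := le_antisymm (by rw [← hz] at huL; exact huL) hu0
    subst hu0'
    rw [h0, ← hz]
    ring_nf
    nlinarith [sq_nonneg (dist x a)]
  · set n : ℕ → ℕ := fun k => ⌊u * 2 ^ k / L⌋₊ with hn
    have hu0 : 0 ≤ u := hu.1
    have huL : u ≤ L := hu.2
    have hnle : ∀ k, n k ≤ 2 ^ k := by
      intro k
      have h1 : u * 2 ^ k / L ≤ ((2 ^ k : ℕ) : ℝ) := by
        rw [div_le_iff₀ hLpos]
        push_cast
        nlinarith [pow_pos (by norm_num : (0:ℝ) < 2) k]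
      calc n k = ⌊u * 2 ^ k / L⌋₊ := rfl
        _ ≤ ⌊((2 ^ k : ℕ) : ℝ)⌋₊ := Nat.floor_mono h1
        _ = 2 ^ k := Nat.floor_natCast _
    set uk : ℕ → ℝ := fun k => ((n k : ℝ)) * (L / 2 ^ k) with huk
    have hukmem : ∀ k, uk k ∈ Set.Icc 0 L := fun k => hmem (n k) k (hnle k)
    have hukle : ∀ k, uk k ≤ u := by
      intro k
      show ((n k : ℝ)) * (L / 2 ^ k) ≤ u
      have h1 : ((n k : ℝ)) ≤ u * 2 ^ k / L := Nat.floor_le (by positivity)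
      have h2 : ((n k : ℝ)) * (L / 2 ^ k) ≤ (u * 2 ^ k / L) * (L / 2 ^ k) :=
        mul_le_mul_of_nonneg_right h1 (by positivity)
      have h3 : (u * 2 ^ k / L) * (L / 2 ^ k) = u := by
        field_simp
      linarith
    have hukge : ∀ k, u - L / 2 ^ k ≤ uk k := by
      intro k
      show u - L / 2 ^ k ≤ ((n k : ℝ)) * (L / 2 ^ k)
      have h1 : u * 2 ^ k / L < (n k : ℝ) + 1 := Nat.lt_floor_add_one _
      have h2 : u * 2 ^ k / L * (L / 2 ^ k) < ((n k : ℝ) + 1) * (L / 2 ^ k) := by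
        apply mul_lt_mul_of_pos_right h1 (by positivity)
      have h3 : (u * 2 ^ k / L) * (L / 2 ^ k) = u := by field_simp
      have h4 : ((n k : ℝ) + 1) * (L / 2 ^ k) = ((n k : ℝ)) * (L / 2 ^ k) + L / 2 ^ k := by
        ring
      linarith
    have hLk0 : Tendsto (fun k : ℕ => L / 2 ^ k) atTop (𝓝 0) := by
      apply Tendsto.div_atTop tendsto_const_nhds
      exact tendsto_pow_atTop_atTop_of_one_lt (by norm_num : (1:ℝ) < 2)
    have hukt : Tendsto uk atTop (𝓝 u) := by
      apply tendsto_of_tendsto_of_tendsto_of_le_of_le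
        (f := uk) (g := fun k : ℕ => u - L / 2 ^ k) (h := fun _ : ℕ => u)
      · have := Tendsto.sub (tendsto_const_nhds (x := u) (f := atTop)) hLk0
        simpa using this
      · exact tendsto_const_nhds
      · exact hukge
      · exact hukle
    have hσt : Tendsto (fun k => σ (uk k)) atTop (𝓝 (σ u)) := by
      rw [tendsto_iff_dist_tendsto_zero]
      have hub : ∀ k, dist (σ (uk k)) (σ u) ≤ L / 2 ^ k := by
        intro k
        rw [hσ (uk k) u (hukmem k) hu]
        rw [abs_of_nonpos (by linarith [hukle k])]
        linarith [hukge k]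
      apply tendsto_of_tendsto_of_tendsto_of_le_of_le
        (g := fun _ : ℕ => (0:ℝ)) (h := fun k : ℕ => L / 2 ^ k)
      · exact tendsto_const_nhds
      · exact hLk0
      · intro k; exact dist_nonneg
      · exact hub
    have hdt : Tendsto (fun k => dist x (σ (uk k))) atTop (𝓝 (dist x (σ u))) :=
      Tendsto.dist tendsto_const_nhds hσt
    have hLHS : Tendsto (fun k => dist x (σ (uk k)) ^ 2 * L) atTop
        (𝓝 (dist x (σ u) ^ 2 * L)) :=
      Tendsto.mul_const L (hdt.pow 2)
    have hRHS : Tendsto (fun k =>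
        (L - uk k) * dist x a ^ 2 + uk k * dist x b ^ 2 - uk k * (L - uk k) * L) atTop
        (𝓝 ((L - u) * dist x a ^ 2 + u * dist x b ^ 2 - u * (L - u) * L)) := by
      apply Tendsto.sub
      · apply Tendsto.add
        · exact Tendsto.mul_const _ (tendsto_const_nhds.sub hukt)
        · exact Tendsto.mul_const _ hukt
      · exact Tendsto.mul_const _ (hukt.mul (tendsto_const_nhds.sub hukt))
    refine le_of_tendsto_of_tendsto' hLHS hRHS ?_
    intro k
    exact key k (n k) (hnle k)

set_option maxHeartbeats 800000 in
/-- Strong convexity of the squared distance in λ-parametrised form. -/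
lemma sc_lambda (hCN : CNInequality M) {a b : M} {σ : ℝ → M}
    (h0 : σ 0 = a) (hL : σ (dist a b) = b)
    (hσ : ∀ s t : ℝ, s ∈ Set.Icc 0 (dist a b) → t ∈ Set.Icc 0 (dist a b) →
      dist (σ s) (σ t) = |s - t|)
    (x : M) {lam : ℝ} (hl0 : 0 ≤ lam) (hl1 : lam ≤ 1) :
    dist x (σ (lam * dist a b)) ^ 2 ≤
      (1 - lam) * dist x a ^ 2 + lam * dist x b ^ 2 - lam * (1 - lam) * dist a b ^ 2 := by
  have hab : 0 ≤ dist a b := dist_nonneg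
  have hu : lam * dist a b ∈ Set.Icc 0 (dist a b) := by
    constructor
    · positivity
    · nlinarith
  have h := sc_aux hCN h0 hL hσ x hu
  rcases eq_or_lt_of_le hab with hz | hpos
  · have habe : a = b := by
      have : dist a b = 0 := hz.symm
      exact dist_eq_zero.mp this
    have h1 : lam * dist a b = 0 := by rw [← hz]; ring
    rw [h1, h0]
    have h2 : dist x b = dist x a := by rw [habe]
    rw [h2, ← hz]
    ring_nf
    nlinarith [sq_nonneg (dist x a)]
  · have hrhs : (dist a b - lam * dist a b) * dist x a ^ 2
        + (lam * dist a b) * dist x b ^ 2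
        - (lam * dist a b) * (dist a b - lam * dist a b) * dist a b
      = ((1 - lam) * dist x a ^ 2 + lam * dist x b ^ 2
          - lam * (1 - lam) * dist a b ^ 2) * dist a b := by ring
    rw [hrhs] at h
    exact le_of_mul_le_mul_right h hpos

set_option maxHeartbeats 1600000 in
/-- The Berg–Nikolaev quadruple inequality, derived from the CN inequality. -/
lemma quad_ineq (hgeo : IsGeodesicSpace M) (hCN : CNInequality M) (p p' q q' : M) :
    dist p p' ^ 2 + dist q q' ^ 2 ≤
      dist p' q ^ 2 + dist p q' ^ 2 + 2 * dist p q * dist p' q' := by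
  obtain ⟨σ, hσ0, hσL, hσp⟩ := hgeo p p'
  obtain ⟨τ, hτ0, hτL, hτp⟩ := hgeo q q'
  have hA : (0:ℝ) ≤ dist q p := dist_nonneg
  have hB' : (0:ℝ) ≤ dist q' p' := dist_nonneg
  have master : ∀ lam : ℝ, 0 ≤ lam → lam ≤ 1 →
      lam * (1 - lam) * (dist q q' ^ 2 + dist p p' ^ 2) ≤
        (1 - lam) ^ 2 * dist q p ^ 2 + lam ^ 2 * dist q' p' ^ 2
          + lam * (1 - lam) * (dist q p' ^ 2 + dist q' p ^ 2) := by
    intro lam h0 h1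
    have hq1 := sc_lambda hCN hσ0 hσL hσp q h0 h1
    have hq2 := sc_lambda hCN hσ0 hσL hσp q' h0 h1
    have hc := sc_lambda hCN hτ0 hτL hτp (σ (lam * dist p p')) h0 h1
    rw [dist_comm (σ (lam * dist p p')) q, dist_comm (σ (lam * dist p p')) q'] at hc
    have hnn : (0:ℝ) ≤ dist (σ (lam * dist p p')) (τ (lam * dist q q')) ^ 2 := sq_nonneg _
    have h1' := mul_le_mul_of_nonneg_left hq1 (by linarith : (0:ℝ) ≤ 1 - lam)
    have h2' := mul_le_mul_of_nonneg_left hq2 h0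
    nlinarith [hnn, hc, h1', h2']
  have final : ∀ ε : ℝ, 0 < ε →
      dist q q' ^ 2 + dist p p' ^ 2 ≤
        dist q p' ^ 2 + dist q' p ^ 2 + 2 * dist q p * dist q' p'
          + (dist q p + dist q' p') * ε := by
    intro ε hε
    set A : ℝ := dist q p with hAA
    set B' : ℝ := dist q' p' with hBB
    set D : ℝ := A + B' + 2 * ε with hD
    have hD0 : 0 < D := by positivity
    set lam : ℝ := (A + ε) / D with hlam
    have h0 : 0 ≤ lam := by positivity
    have h1 : lam ≤ 1 := by
      rw [hlam, div_le_one hD0]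
      rw [hD]
      linarith
    have e1 : lam * D = A + ε := by rw [hlam]; field_simp
    have e2 : (1 - lam) * D = B' + ε := by
      rw [hlam]
      field_simp
      rw [hD]
      ring
    have hm := master lam h0 h1
    have hm2 : (A + ε) * (B' + ε) * (dist q q' ^ 2 + dist p p' ^ 2) ≤
        (B' + ε) ^ 2 * A ^ 2 + (A + ε) ^ 2 * B' ^ 2
          + (A + ε) * (B' + ε) * (dist q p' ^ 2 + dist q' p ^ 2) := by
      have hDD := mul_le_mul_of_nonneg_left hm (le_of_lt (by positivity : (0:ℝ) < D ^ 2))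
      calc (A + ε) * (B' + ε) * (dist q q' ^ 2 + dist p p' ^ 2)
          = D ^ 2 * (lam * (1 - lam) * (dist q q' ^ 2 + dist p p' ^ 2)) := by
            rw [← e1, ← e2]; ring
        _ ≤ D ^ 2 * ((1 - lam) ^ 2 * dist q p ^ 2 + lam ^ 2 * dist q' p' ^ 2
              + lam * (1 - lam) * (dist q p' ^ 2 + dist q' p ^ 2)) := hDD
        _ = (B' + ε) ^ 2 * A ^ 2 + (A + ε) ^ 2 * B' ^ 2
              + (A + ε) * (B' + ε) * (dist q p' ^ 2 + dist q' p ^ 2) := by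
            rw [← e1, ← e2]; ring
    have haux : (B' + ε) ^ 2 * A ^ 2 + (A + ε) ^ 2 * B' ^ 2 ≤
        (A + ε) * (B' + ε) * (2 * A * B' + (A + B') * ε) := by
      nlinarith [sq_nonneg (A - B'), sq_nonneg (A + B'), mul_nonneg hA hB',
        mul_nonneg (mul_nonneg hA hB') (add_nonneg hA hB'), hε.le,
        mul_nonneg (mul_nonneg hA hB') hε.le, sq_nonneg ε,
        mul_nonneg (mul_nonneg hε.le hε.le) (add_nonneg hA hB')]
    have hpos2 : (0:ℝ) < (A + ε) * (B' + ε) := by positivity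
    have hm3 : (A + ε) * (B' + ε) * (dist q q' ^ 2 + dist p p' ^ 2) ≤
        (A + ε) * (B' + ε) *
          (dist q p' ^ 2 + dist q' p ^ 2 + 2 * A * B' + (A + B') * ε) := by
      nlinarith [hm2, haux]
    have := le_of_mul_le_mul_left
      (by calc (A + ε) * (B' + ε) * (dist q q' ^ 2 + dist p p' ^ 2)
            ≤ (A + ε) * (B' + ε) *
              (dist q p' ^ 2 + dist q' p ^ 2 + 2 * A * B' + (A + B') * ε) := hm3) hpos2
    linarith
  have hfin : dist q q' ^ 2 + dist p p' ^ 2 ≤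
      dist q p' ^ 2 + dist q' p ^ 2 + 2 * dist q p * dist q' p' := by
    apply le_of_forall_pos_le_add
    intro ε hε
    have hden : (0:ℝ) < dist q p + dist q' p' + 1 := by positivity
    have h := final (ε / (dist q p + dist q' p' + 1)) (by positivity)
    have hb : (dist q p + dist q' p') * (ε / (dist q p + dist q' p' + 1)) ≤ ε := by
      rw [mul_div_assoc']
      rw [div_le_iff₀ hden]
      nlinarith
    linarith
  have c1 : dist p' q = dist q p' := dist_comm _ _
  have c2 : dist p q' = dist q' p := dist_comm _ _
  have c3 : dist p q = dist q p := dist_comm _ _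
  have c4 : dist p' q' = dist q' p' := dist_comm _ _
  rw [c1, c2, c3, c4]
  linarith

end StrongConvexity

section MainArgument

variable {M : Type*} [MetricSpace M]

set_option maxHeartbeats 800000 in
/-- Along an asymptotic ray, the Busemann function grows at least linearly, with the
constant given by the Busemann function of the other ray at the basepoint. -/
lemma busemann_ray_lower (hgeo : IsGeodesicSpace M) (hCN : CNInequality M)
    {γ γ' : ℝ → M} (hγ : IsGeodesicRay γ) (hγ' : IsGeodesicRay γ')
    {r : ℝ} (hr : ∀ t : ℝ, 0 ≤ t → dist (γ t) (γ' t) ≤ r)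
    {T : ℝ} (hT : 0 ≤ T) :
    T - busemann γ' (γ 0) ≤ busemann γ (γ' T) := by
  set c' := busemann γ' (γ 0) with hc'
  have hr0 : 0 ≤ r := le_trans dist_nonneg (hr 0 le_rfl)
  apply le_of_forall_pos_le_add
  intro ε hε
  set s : ℝ := T + 1 + |c'| + r ^ 2 / ε with hs
  have habs1 : -|c'| ≤ c' := neg_abs_le _
  have habs2 : c' ≤ |c'| := le_abs_self _
  have hrε : 0 ≤ r ^ 2 / ε := by positivity
  have h0abs : 0 ≤ |c'| := abs_nonneg _
  have hsT : T < s := by rw [hs]; linarith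
  have hs0 : 0 ≤ s := le_trans hT (le_of_lt hsT)
  set K : ℝ := s - T + c' with hK
  have hK1 : 1 ≤ K := by rw [hK, hs]; linarith
  have hKε : r ^ 2 ≤ K * ε := by
    have h1 : r ^ 2 / ε ≤ K := by rw [hK, hs]; linarith
    calc r ^ 2 = r ^ 2 / ε * ε := by field_simp
      _ ≤ K * ε := mul_le_mul_of_nonneg_right h1 hε.le
  set D1 := dist (γ' T) (γ s) with hD1
  set D2 := dist (γ T) (γ' s) with hD2
  have hquad := quad_ineq hgeo hCN (γ' T) (γ s) (γ T) (γ' s)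
  -- hquad : dist (γ' T) (γ s)² + dist (γ T) (γ' s)²
  --   ≤ dist (γ s) (γ T)² + dist (γ' T) (γ' s)² + 2 dist (γ' T) (γ T) dist (γ s) (γ' s)
  have hgs : dist (γ s) (γ T) = s - T := by
    rw [hγ s T hs0 hT, abs_of_nonneg (by linarith)]
  have hg's : dist (γ' T) (γ' s) = s - T := by
    rw [hγ' T s hT hs0, abs_of_nonpos (by linarith)]; ring
  have hδT : dist (γ' T) (γ T) ≤ r := by rw [dist_comm]; exact hr T hT
  have hδs : dist (γ s) (γ' s) ≤ r := hr s hs0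
  have hδT0 : 0 ≤ dist (γ' T) (γ T) := dist_nonneg
  have hδs0 : 0 ≤ dist (γ s) (γ' s) := dist_nonneg
  have hquad2 : D1 ^ 2 + D2 ^ 2 ≤ 2 * (s - T) ^ 2 + 2 * r ^ 2 := by
    rw [hgs, hg's] at hquad
    nlinarith [hquad, hδT, hδs, hδT0, hδs0]
  have hD2low : s - T - c' ≤ D2 := by
    have h1 : s - D2 ≤ busemann γ' (γ T) := le_busemann hγ' (γ T) hs0
    have h2 : busemann γ' (γ T) ≤ c' + T := by
      have h3 := busemann_lipschitz hγ' (γ T) (γ 0)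
      have hd : dist (γ T) (γ 0) = T := by
        rw [hγ T 0 hT le_rfl, sub_zero, abs_of_nonneg hT]
      rw [hd] at h3
      linarith
    linarith
  have hst : 0 ≤ s - T - c' := by rw [hs]; linarith
  have h2sq : (s - T - c') ^ 2 ≤ D2 ^ 2 := by nlinarith [hD2low, hst]
  have hD1nn : 0 ≤ D1 := dist_nonneg
  have h3 : D1 ^ 2 ≤ (K + ε) ^ 2 := by
    have hKexp : 2 * (s - T) ^ 2 + 2 * r ^ 2 - (s - T - c') ^ 2 = K ^ 2 - 2 * c' ^ 2 + 2 * r ^ 2 := by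
      rw [hK]; ring
    nlinarith [hquad2, h2sq, hKε, hε, sq_nonneg c']
  have hKε0 : 0 < K + ε := by linarith
  have hD1le : D1 ≤ K + ε := by nlinarith [h3, hD1nn, hKε0]
  have hfinal : s - D1 ≤ busemann γ (γ' T) := le_busemann hγ (γ' T) hs0
  have : s - (K + ε) = T - c' - ε := by rw [hK]; ring
  linarith

/-- Comparison of Busemann functions of asymptotic rays: one-sided shift estimate. -/
lemma busemann_shift_le (hgeo : IsGeodesicSpace M) (hCN : CNInequality M)
    {γ γ' : ℝ → M} (hγ : IsGeodesicRay γ) (hγ' : IsGeodesicRay γ')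
    {r : ℝ} (hr : ∀ t : ℝ, 0 ≤ t → dist (γ t) (γ' t) ≤ r) (x : M) :
    busemann γ' x ≤ busemann γ x + busemann γ' (γ 0) := by
  apply busemann_le
  intro T hT
  have h1 := busemann_ray_lower hgeo hCN hγ hγ' hr hT
  have h2 := busemann_lipschitz hγ (γ' T) x
  have h3 := dist_comm x (γ' T)
  linarith

set_option maxHeartbeats 800000 in
/-- The sum of the two "shift constants" is nonpositive. -/
lemma c_sum_nonpos (hgeo : IsGeodesicSpace M) (hCN : CNInequality M)
    {γ γ' : ℝ → M} (hγ : IsGeodesicRay γ) (hγ' : IsGeodesicRay γ')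
    {r : ℝ} (hr : ∀ t : ℝ, 0 ≤ t → dist (γ t) (γ' t) ≤ r) :
    busemann γ (γ' 0) + busemann γ' (γ 0) ≤ 0 := by
  set c := busemann γ (γ' 0) with hc
  set c' := busemann γ' (γ 0) with hc'
  have hr0 : 0 ≤ r := le_trans dist_nonneg (hr 0 le_rfl)
  set ρ : ℝ := dist (γ 0) (γ' 0) with hρ
  have hρr : ρ ≤ r := hr 0 le_rfl
  have hρ0 : 0 ≤ ρ := dist_nonneg
  have key : ∀ ε : ℝ, 0 < ε → c + c' ≤ 3 * ε := by
    intro ε hε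
    obtain ⟨v1, hv1mem, hv1⟩ := exists_lt_of_lt_csSup (busemann_set_nonempty γ (γ' 0))
      (show c - ε < busemann γ (γ' 0) by rw [← hc]; linarith)
    obtain ⟨t1, ht1, rfl⟩ := hv1mem
    obtain ⟨v2, hv2mem, hv2⟩ := exists_lt_of_lt_csSup (busemann_set_nonempty γ' (γ 0))
      (show c' - ε < busemann γ' (γ 0) by rw [← hc']; linarith)
    obtain ⟨t2, ht2, rfl⟩ := hv2mem
    set t : ℝ := max t1 (max t2 (2 * r ^ 2 / ε + 1)) with ht
    have htt1 : t1 ≤ t := le_max_left _ _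
    have htt2 : t2 ≤ t := le_trans (le_max_left _ _) (le_max_right _ _)
    have ht1' : 2 * r ^ 2 / ε + 1 ≤ t := le_trans (le_max_right _ _) (le_max_right _ _)
    have ht0 : 0 < t := lt_of_lt_of_le (by positivity) ht1'
    have hm1 : c - ε < t - dist (γ' 0) (γ t) :=
      lt_of_lt_of_le hv1 (busemann_term_mono hγ (γ' 0) ht1 htt1)
    have hm2 : c' - ε < t - dist (γ 0) (γ' t) :=
      lt_of_lt_of_le hv2 (busemann_term_mono hγ' (γ 0) ht2 htt2)
    set D1 := dist (γ' 0) (γ t) with hD1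
    set D2 := dist (γ 0) (γ' t) with hD2
    have hquad := quad_ineq hgeo hCN (γ 0) (γ t) (γ' 0) (γ' t)
    -- dist (γ0)(γt)² + dist (γ'0)(γ't)² ≤ dist (γt)(γ'0)² + dist (γ0)(γ't)²
    --   + 2 dist (γ0)(γ'0) dist (γt)(γ't)
    have hγt : dist (γ 0) (γ t) = t := by
      rw [hγ 0 t le_rfl ht0.le, zero_sub, abs_neg, abs_of_nonneg ht0.le]
    have hγ't : dist (γ' 0) (γ' t) = t := by
      rw [hγ' 0 t le_rfl ht0.le, zero_sub, abs_neg, abs_of_nonneg ht0.le]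
    have hδ : dist (γ t) (γ' t) ≤ r := hr t ht0.le
    have hδ0 : 0 ≤ dist (γ t) (γ' t) := dist_nonneg
    have hcomm : dist (γ t) (γ' 0) = D1 := dist_comm _ _
    have hq2 : 2 * t ^ 2 ≤ D1 ^ 2 + D2 ^ 2 + 2 * ρ * r := by
      rw [hγt, hγ't, hcomm] at hquad
      nlinarith [hquad, hδ, hρ0, hδ0]
    have hD1ub : D1 ≤ t + ρ := by
      calc D1 ≤ dist (γ' 0) (γ 0) + dist (γ 0) (γ t) := dist_triangle _ _ _
        _ = t + ρ := by rw [hγt, dist_comm (γ' 0) (γ 0)]; ring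
    have hD1lb : t - ρ ≤ D1 := by
      have h := dist_triangle (γ 0) (γ' 0) (γ t)
      rw [hγt] at h
      linarith
    have hD2ub : D2 ≤ t + ρ := by
      calc D2 ≤ dist (γ 0) (γ' 0) + dist (γ' 0) (γ' t) := dist_triangle _ _ _
        _ = t + ρ := by rw [hγ't]; ring
    have hD2lb : t - ρ ≤ D2 := by
      have h := dist_triangle (γ' 0) (γ 0) (γ' t)
      rw [hγ't, dist_comm (γ' 0) (γ 0)] at h
      linarith
    have e1 : (D1 - t) ^ 2 ≤ ρ ^ 2 := by nlinarith [hD1ub, hD1lb]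
    have e2 : (D2 - t) ^ 2 ≤ ρ ^ 2 := by nlinarith [hD2ub, hD2lb]
    have e3 : ρ * r ≤ r ^ 2 := by nlinarith [hρr, hρ0]
    have e4 : ρ ^ 2 ≤ r ^ 2 := by nlinarith [hρr, hρ0]
    have hsum : 2 * t - D1 - D2 ≤ 2 * r ^ 2 / t := by
      rw [le_div_iff₀ ht0]
      nlinarith [hq2, e1, e2, e3, e4]
    have hd : 2 * r ^ 2 / t ≤ ε := by
      rw [div_le_iff₀ ht0]
      have h5 : 2 * r ^ 2 / ε ≤ t := by linarith
      calc 2 * r ^ 2 = 2 * r ^ 2 / ε * ε := by field_simp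
        _ ≤ t * ε := mul_le_mul_of_nonneg_right h5 hε.le
        _ = ε * t := by ring
    linarith
  by_contra hcon
  push_neg at hcon
  have := key ((c + c') / 4) (by linarith)
  linarith

/-- Busemann functions of asymptotic rays differ by a constant. -/
lemma busemann_diff_eq (hgeo : IsGeodesicSpace M) (hCN : CNInequality M)
    {γ γ' : ℝ → M} (hγ : IsGeodesicRay γ) (hγ' : IsGeodesicRay γ')
    (hasym : AsymptoticRays γ γ') (x : M) :
    busemann γ' x = busemann γ x + busemann γ' (γ 0) := by
  obtain ⟨r, hr⟩ := hasym
  have hr' : ∀ t : ℝ, 0 ≤ t → dist (γ' t) (γ t) ≤ r := fun t ht => by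
    rw [dist_comm]; exact hr t ht
  have hA1 := busemann_shift_le hgeo hCN hγ hγ' hr x
  have hA2 := busemann_shift_le hgeo hCN hγ' hγ hr' x
  have hB := c_sum_nonpos hgeo hCN hγ hγ' hr
  have hself : busemann γ (γ 0) = 0 := busemann_self hγ le_rfl
  have hC : 0 ≤ busemann γ (γ' 0) + busemann γ' (γ 0) := by
    have h := busemann_shift_le hgeo hCN hγ' hγ hr' (γ 0)
    rw [hself] at h
    linarith
  linarith

end MainArgument

/-- `ψ_γ(g, a) := β_γ(g(a)) − β_γ(a)` depends only on the
asymptoty class of `γ`, and satisfies the cocycle identity. -/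
theorem busemann_cocycle {M : Type*} [MetricSpace M] [ProperSpace M]
    (hgeo : IsGeodesicSpace M) (hCN : CNInequality M)
    (γ : ℝ → M) (hγ : IsGeodesicRay γ) :
    (∀ γ' : ℝ → M, IsGeodesicRay γ' → AsymptoticRays γ γ' →
      ∀ g : M → M, Function.Surjective g → Isometry g → ∀ a : M,
        busemann γ' (g a) - busemann γ' a = busemann γ (g a) - busemann γ a) ∧
    (∀ g h : M → M, Function.Surjective g → Isometry g →
      Function.Surjective h → Isometry h → ∀ a : M,
        busemann γ ((g ∘ h) a) - busemann γ a =
          (busemann γ (g (h a)) - busemann γ (h a)) +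
            (busemann γ (h a) - busemann γ a)) := by
  constructor
  · intro γ' hγ' hasym g _ _ a
    rw [busemann_diff_eq hgeo hCN hγ hγ' hasym (g a),
      busemann_diff_eq hgeo hCN hγ hγ' hasym a]
    ring
  · intro g h _ _ _ _ a
    simp only [Function.comp_apply]
    ring
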